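/- arXiv:1603.01033 — 2 statements merged into one kernel-verified Lean document; each statement's English description precedes it below -/
import Mathlib

section
/- For every open invariant subset U of the boundary path space X, the set H_U is hereditary and saturated and S_U ⊆ B_{H_U}; in particular (H_U, S_U) ∈ 𝒯_E. -/
namespace GraphLPA

/-- A directed graph: vertices, edges, and source/range maps. -/
structure DirGraph where
  V : Type
  Ed : Type
  src : Ed → V
  rng : Ed → V

/-- A vertex is a sink if it emits no edges. -/
def IsSink (G : DirGraph) (v : G.V) : Prop := ∀ e : G.Ed, G.src e ≠ v

/-- A vertex is an infinite emitter if it emits infinitely many edges. -/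
def IsInfEmitter (G : DirGraph) (v : G.V) : Prop := {e : G.Ed | G.src e = v}.Infinite

/-- A vertex is regular if it is neither a sink nor an infinite emitter. -/
def IsRegular (G : DirGraph) (v : G.V) : Prop := ¬ IsSink G v ∧ ¬ IsInfEmitter G v

/-- A (raw) finite path: a starting vertex together with a list of edges.
A vertex is regarded as the finite path with empty edge list. -/
structure FinPath (G : DirGraph) where
  start : G.V
  edges : List G.Ed

/-- The range of a finite path: the range of its last edge, or its start if it has length 0. -/
def FinPath.range {G : DirGraph} (p : FinPath G) : G.V :=
  match p.edges.getLast? with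
  | none => p.start
  | some e => G.rng e

/-- The validity condition for a finite path: the first edge (if any) starts at `start`,
and consecutive edges are composable. -/
def FinPath.IsPath {G : DirGraph} (p : FinPath G) : Prop :=
  (∀ e ∈ p.edges.head?, G.src e = p.start) ∧
    p.edges.Chain' (fun e f => G.rng e = G.src f)

/-- An infinite sequence of edges is an infinite path if consecutive edges are composable. -/
def InfIsPath (G : DirGraph) (f : ℕ → G.Ed) : Prop :=
  ∀ n, G.rng (f n) = G.src (f (n + 1))

/-- Raw boundary paths: either a finite path or an infinite sequence of edges. -/
inductive BPath (G : DirGraph) where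
  | fin : FinPath G → BPath G
  | inf : (ℕ → G.Ed) → BPath G

/-- The source of a boundary path. -/
def BPath.start {G : DirGraph} : BPath G → G.V
  | .fin p => p.start
  | .inf f => G.src (f 0)

/-- Membership in the boundary path space: a valid finite path whose range
is a sink or infinite emitter, or a valid infinite path. -/
def BPath.IsBoundary {G : DirGraph} : BPath G → Prop
  | .fin p => p.IsPath ∧ (IsSink G p.range ∨ IsInfEmitter G p.range)
  | .inf f => InfIsPath G f

/-- A vertex occurring on a boundary path (the source, or the range of any of its edges). -/
def BPath.vertexOn {G : DirGraph} : BPath G → G.V → Prop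
  | .fin p, v => p.start = v ∨ ∃ e ∈ p.edges, G.rng e = v
  | .inf f, v => G.src (f 0) = v ∨ ∃ n, G.rng (f n) = v

/-- The boundary path space `X` of the graph `G`. -/
def BPS (G : DirGraph) : Type := { x : BPath G // x.IsBoundary }

/-- Concatenation `μx` of a finite path `μ` with a boundary path `x`. -/
def FinPath.catB {G : DirGraph} (μ : FinPath G) : BPath G → BPath G
  | .fin p => .fin ⟨μ.start, μ.edges ++ p.edges⟩
  | .inf f => .inf (fun n => if h : n < μ.edges.length then μ.edges[n] else f (n - μ.edges.length))

/-- The cylinder set `Z(μ) = {μx : x ∈ X, s(x) = r(μ)}`. -/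
def ZSet {G : DirGraph} (μ : FinPath G) : Set (BPS G) :=
  { x | ∃ z : BPS G, z.1.start = μ.range ∧ x.1 = μ.catB z.1 }

/-- The finite path `μe` obtained by appending an edge. -/
def FinPath.extend {G : DirGraph} (μ : FinPath G) (e : G.Ed) : FinPath G :=
  ⟨μ.start, μ.edges ++ [e]⟩

/-- The basic set `Z(μ∖F) = Z(μ) ∖ ⋃_{e ∈ F} Z(μe)`. -/
def ZSetMinus {G : DirGraph} (μ : FinPath G) (F : Finset G.Ed) : Set (BPS G) :=
  ZSet μ \ ⋃ e ∈ F, ZSet (μ.extend e)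

/-- The topology on the boundary path space generated by the sets `Z(μ∖F)`. -/
instance BPS.instTopologicalSpace (G : DirGraph) : TopologicalSpace (BPS G) :=
  TopologicalSpace.generateFrom
    { U | ∃ (μ : FinPath G) (F : Finset G.Ed),
        μ.IsPath ∧ (∀ e ∈ F, G.src e = μ.range) ∧ U = ZSetMinus μ F }

/-- A subset `U ⊆ X` is invariant if whenever `αz ∈ U` with `α, β` finite paths with
`r(α) = r(β)` and `s(z) = r(α)`, then `βz ∈ U`. -/
def IsInvariant {G : DirGraph} (U : Set (BPS G)) : Prop :=
  ∀ α β : FinPath G, α.IsPath → β.IsPath → α.range = β.range →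
    ∀ z : BPS G, z.1.start = α.range →
      ∀ x y : BPS G, x.1 = α.catB z.1 → y.1 = β.catB z.1 → x ∈ U → y ∈ U

/-- A set of vertices is hereditary if it is closed under ranges of edges out of it. -/
def Hereditary (G : DirGraph) (H : Set G.V) : Prop :=
  ∀ e : G.Ed, G.src e ∈ H → G.rng e ∈ H

/-- A set of vertices is saturated if it contains every regular vertex all of whose
emitted edges have range in it. -/
def Saturated (G : DirGraph) (H : Set G.V) : Prop :=
  ∀ v : G.V, IsRegular G v → (∀ e : G.Ed, G.src e = v → G.rng e ∈ H) → v ∈ H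

/-- The set `B_H` of breaking vertices of a hereditary set `H`. -/
def BreakVerts (G : DirGraph) (H : Set G.V) : Set G.V :=
  { v | v ∉ H ∧ IsInfEmitter G v ∧
      { e : G.Ed | G.src e = v ∧ G.rng e ∉ H }.Finite ∧
      { e : G.Ed | G.src e = v ∧ G.rng e ∉ H }.Nonempty }

/-- `U_H`: the boundary paths on which some vertex of `H` occurs. -/
def UH {G : DirGraph} (H : Set G.V) : Set (BPS G) :=
  { x | ∃ v ∈ H, x.1.vertexOn v }

/-- `U_S`: the boundary paths that are finite paths with range in `S`. -/
def US {G : DirGraph} (S : Set G.V) : Set (BPS G) :=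
  { x | ∃ p : FinPath G, x.1 = BPath.fin p ∧ p.range ∈ S }

/-- `U_{H,S} = U_H ∪ U_S`. -/
def UHS {G : DirGraph} (H S : Set G.V) : Set (BPS G) := UH H ∪ US S

/-- `H_U = {v : Z(v) ⊆ U}`. -/
def HOf {G : DirGraph} (U : Set (BPS G)) : Set G.V :=
  { v | ZSet (⟨v, []⟩ : FinPath G) ⊆ U }

/-- `S_U`: ranges of finite paths in `U` whose range is an infinite emitter not in `H_U`. -/
def SOf {G : DirGraph} (U : Set (BPS G)) : Set G.V :=
  { w | ∃ x ∈ U, ∃ p : FinPath G, x.1 = BPath.fin p ∧ p.range = w ∧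
      IsInfEmitter G w ∧ w ∉ HOf U }

/-- `Path(v, H)`: the finite paths of positive length with source `v` and range in `H`. -/
def PathTo {G : DirGraph} (v : G.V) (H : Set G.V) : Set (FinPath G) :=
  { p | p.IsPath ∧ p.start = v ∧ p.edges ≠ [] ∧ p.range ∈ H }

/-- Condition (a): every infinite path all of whose vertices lie outside `H`
eventually does not connect to `H`. -/
def CondA (G : DirGraph) (H : Set G.V) : Prop :=
  ∀ f : ℕ → G.Ed, InfIsPath G f →
    (G.src (f 0) ∉ H ∧ ∀ n, G.rng (f n) ∉ H) →
    ∃ N : ℕ, PathTo (G.rng (f N)) H = ∅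

/-- Condition (b) with target set `S`: every vertex emitting infinitely many edges
that connect to `H` belongs to `H ∪ S`. -/
def CondB (G : DirGraph) (H S : Set G.V) : Prop :=
  ∀ v : G.V,
    { e : G.Ed | G.src e = v ∧ (PathTo (G.rng e) H).Nonempty }.Infinite → v ∈ H ∪ S

/-- An `H`-compatible path: a finite path of positive length with range in `H`
whose last edge has source outside `H ∪ B_H`. -/
def HCompatible {G : DirGraph} (H : Set G.V) (p : FinPath G) : Prop :=
  p.IsPath ∧ p.edges ≠ [] ∧ p.range ∈ H ∧
    ∀ e ∈ p.edges.getLast?, G.src e ∉ H ∪ BreakVerts G H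

/-- `C_{v,H}`: the set of `H`-compatible paths with source `v`. -/
def CSet {G : DirGraph} (v : G.V) (H : Set G.V) : Set (FinPath G) :=
  { p | p.start = v ∧ HCompatible H p }

end GraphLPA

namespace GraphLPA

variable {G : DirGraph}

open List

lemma range_nil (v : G.V) : (⟨v, []⟩ : FinPath G).range = v := rfl

lemma range_of_nil (p : FinPath G) (h : p.edges = []) : p.range = p.start := by
  unfold FinPath.range; rw [h]; rfl

lemma range_eq_of_getLast? {p : FinPath G} {e : G.Ed} (h : p.edges.getLast? = some e) :
    p.range = G.rng e := by
  unfold FinPath.range; rw [h]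

lemma range_of_ne_nil (p : FinPath G) (h : p.edges ≠ []) :
    p.range = G.rng (p.edges.getLast h) :=
  range_eq_of_getLast? (List.getLast?_eq_getLast h)

lemma exists_getLast? {l : List G.Ed} (h : l ≠ []) : ∃ e, l.getLast? = some e :=
  ⟨l.getLast h, List.getLast?_eq_getLast h⟩

lemma src_getElem_zero (p : FinPath G) (hp : p.IsPath) (h : 0 < p.edges.length) :
    G.src (p.edges[0]'h) = p.start := by
  rcases p with ⟨v, l⟩
  cases l with
  | nil => simp at h
  | cons e l => exact hp.1 e rfl

lemma range_eq_rng_getElem (p : FinPath G) (h : 0 < p.edges.length) :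
    p.range = G.rng (p.edges[p.edges.length - 1]'(by omega)) := by
  rw [range_of_ne_nil p (by intro hn; rw [hn] at h; simp at h), List.getLast_eq_getElem]

lemma chain_rel (p : FinPath G) (hp : p.IsPath) {i : ℕ} (h : i + 1 < p.edges.length) :
    G.rng (p.edges[i]'(by omega)) = G.src (p.edges[i+1]'h) := by
  have := List.isChain_iff_getElem.mp hp.2 i (by omega)
  simpa [List.get_eq_getElem] using this

lemma head_src {l : List G.Ed} {p : FinPath G} (hp : p.IsPath) (h : p.edges = l) {e : G.Ed}
    (he : e ∈ l.head?) : G.src e = p.start := by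
  apply hp.1; rw [h]; exact he

/-- appending finite paths -/
lemma isPath_append (μ ν : FinPath G) (hμ : μ.IsPath) (hν : ν.IsPath) (h : ν.start = μ.range) :
    (⟨μ.start, μ.edges ++ ν.edges⟩ : FinPath G).IsPath := by
  constructor
  · intro e he
    simp only [List.head?_append] at he
    rcases hμ' : μ.edges with _ | ⟨a, l⟩
    · rw [hμ'] at he; simp only [List.head?_nil, Option.none_or] at he
      rw [hν.1 e he, h, range_of_nil μ hμ']
    · rw [hμ'] at he
      have he' : a = e := by
        simpa [show ((a :: l).head?).or ν.edges.head? = some a from rfl] using he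
      cases he'
      exact hμ.1 _ (by rw [hμ']; rfl)
  · unfold List.Chain'; rw [List.isChain_append]
    refine ⟨hμ.2, hν.2, ?_⟩
    intro x hx y hy
    rw [hν.1 y hy, h, range_eq_of_getLast? hx]

lemma range_append (μ ν : FinPath G) (h : ν.start = μ.range) :
    (⟨μ.start, μ.edges ++ ν.edges⟩ : FinPath G).range = ν.range := by
  rcases hν' : ν.edges with _ | ⟨b, m⟩
  · rw [List.append_nil, range_of_nil ν hν', h]
  · obtain ⟨x, hx⟩ := exists_getLast? (l := b :: m) (by simp)
    have hx' : (⟨μ.start, μ.edges ++ b :: m⟩ : FinPath G).edges.getLast? = some x := by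
      show (μ.edges ++ b :: m).getLast? = some x
      rw [List.getLast?_append, hx]; rfl
    rw [range_eq_of_getLast? (p := ν) (by rw [hν']; exact hx), range_eq_of_getLast? hx']

/-- splitting a path -/
lemma isPath_split (p : FinPath G) (hp : p.IsPath) (l₁ l₂ : List G.Ed) (h : p.edges = l₁ ++ l₂) :
    (⟨p.start, l₁⟩ : FinPath G).IsPath ∧
    (⟨(⟨p.start, l₁⟩ : FinPath G).range, l₂⟩ : FinPath G).IsPath ∧
    (⟨(⟨p.start, l₁⟩ : FinPath G).range, l₂⟩ : FinPath G).range = p.range := by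
  have hch := hp.2
  rw [h] at hch; unfold List.Chain' at hch; rw [List.isChain_append] at hch
  refine ⟨⟨?_, hch.1⟩, ⟨?_, hch.2.1⟩, ?_⟩
  · intro e he
    apply hp.1
    rw [h, List.head?_append]
    rcases l₁ with _ | ⟨a, m⟩
    · simp at he
    · simp only [List.head?_cons, Option.mem_some_iff] at he ⊢
      simpa using he
  · intro e he
    rcases hl₁ : l₁ with _ | ⟨a, m⟩
    · subst hl₁
      rw [range_of_nil _ rfl]
      apply hp.1
      rw [h]
      simpa using he
    · subst hl₁
      obtain ⟨x, hx⟩ := exists_getLast? (l := a :: m) (by simp)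
      rw [range_eq_of_getLast? (p := ⟨p.start, a :: m⟩) hx]
      exact (hch.2.2 x hx e he).symm
  · rcases hl₂ : l₂ with _ | ⟨b, k⟩
    · subst hl₂
      rw [range_of_nil (p := ⟨_, ([] : List G.Ed)⟩) rfl]
      have : p.edges = l₁ := by rw [h]; simp
      rcases hl₁ : l₁ with _ | ⟨a, m⟩
      · rw [range_of_nil _ rfl, range_of_nil p (by rw [this, hl₁])]
      · subst hl₁
        obtain ⟨x, hx⟩ := exists_getLast? (l := a :: m) (by simp)
        rw [range_eq_of_getLast? (p := ⟨p.start, a :: m⟩) hx,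
            range_eq_of_getLast? (p := p) (by rw [this]; exact hx)]
    · subst hl₂
      obtain ⟨x, hx⟩ := exists_getLast? (l := b :: k) (by simp)
      rw [range_eq_of_getLast? (p := ⟨_, b :: k⟩) hx,
          range_eq_of_getLast? (p := p) (by rw [h, List.getLast?_append, hx]; rfl)]

lemma isPath_nil (v : G.V) : (⟨v, []⟩ : FinPath G).IsPath :=
  ⟨fun e he => by simp at he, List.isChain_nil⟩

lemma catB_start (μ : FinPath G) (hμ : μ.IsPath) (b : BPath G) (hb : b.start = μ.range) :
    (μ.catB b).start = μ.start := by
  cases b with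
  | fin q => rfl
  | inf f =>
    show G.src (if h : 0 < μ.edges.length then μ.edges[0] else f (0 - μ.edges.length)) = μ.start
    by_cases h : 0 < μ.edges.length
    · rw [dif_pos h]; exact src_getElem_zero μ hμ h
    · rw [dif_neg h]
      have hnil : μ.edges = [] := by
        cases hμe : μ.edges with
        | nil => rfl
        | cons a l => rw [hμe] at h; simp at h
      have h0 : G.src (f 0) = μ.range := hb
      rw [range_of_nil μ hnil] at h0
      simpa using h0

lemma catB_isBoundary (μ : FinPath G) (hμ : μ.IsPath) (b : BPath G) (hb : b.IsBoundary)
    (h : b.start = μ.range) : (μ.catB b).IsBoundary := by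
  cases b with
  | fin q =>
    obtain ⟨hq, hr⟩ := hb
    have h' : q.start = μ.range := h
    refine ⟨isPath_append μ q hμ hq h', ?_⟩
    rw [show (⟨μ.start, μ.edges ++ q.edges⟩ : FinPath G).range = q.range from range_append μ q h']
    exact hr
  | inf f =>
    have hf : InfIsPath G f := hb
    have h' : G.src (f 0) = μ.range := h
    intro n
    show G.rng (if h : n < μ.edges.length then μ.edges[n] else f (n - μ.edges.length)) =
        G.src (if h : n + 1 < μ.edges.length then μ.edges[n+1] else f (n + 1 - μ.edges.length))
    by_cases h1 : n + 1 < μ.edges.length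
    · rw [dif_pos (by omega), dif_pos h1]
      exact chain_rel μ hμ h1
    · rw [dif_neg h1]
      by_cases h2 : n < μ.edges.length
      · obtain rfl : n = μ.edges.length - 1 := by omega
        rw [dif_pos h2]
        have h3 : μ.edges.length - 1 + 1 - μ.edges.length = 0 := by omega
        rw [h3, h']
        exact (range_eq_rng_getElem μ (by omega)).symm
      · rw [dif_neg h2]
        have e1 : n - μ.edges.length + 1 = n + 1 - μ.edges.length := by omega
        rw [← e1]
        exact hf (n - μ.edges.length)

lemma catB_assoc (μ δ : FinPath G) (b : BPath G) :
    μ.catB (δ.catB b) = (⟨μ.start, μ.edges ++ δ.edges⟩ : FinPath G).catB b := by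
  cases b with
  | fin q => simp [FinPath.catB, List.append_assoc]
  | inf f =>
    simp only [FinPath.catB]
    congr 1
    funext n
    simp only [List.length_append]
    by_cases h1 : n < μ.edges.length
    · rw [dif_pos h1, dif_pos (by omega), List.getElem_append_left h1]
    · rw [dif_neg h1]
      by_cases h2 : n - μ.edges.length < δ.edges.length
      · rw [dif_pos h2, dif_pos (by omega), List.getElem_append_right (by omega)]
      · rw [dif_neg h2, dif_neg (by omega)]
        congr 1
        omega

lemma catB_nil (v : G.V) (b : BPath G) (hb : b.start = v) :
    (⟨v, []⟩ : FinPath G).catB b = b := by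
  cases b with
  | fin q =>
    have hq : q.start = v := hb
    simp [FinPath.catB, ← hq]
  | inf f =>
    simp [FinPath.catB]

lemma mem_ZSet_nil {x : BPS G} {v : G.V} : x ∈ ZSet (⟨v, []⟩ : FinPath G) ↔ x.1.start = v := by
  constructor
  · rintro ⟨z, hz, hx⟩
    rw [hx, catB_start _ (isPath_nil v) _ hz]
  · intro h
    exact ⟨x, h, (catB_nil v x.1 h).symm⟩

/-- `μ x` as an element of the boundary path space. -/
def catBPS (μ : FinPath G) (hμ : μ.IsPath) (z : BPS G) (h : z.1.start = μ.range) : BPS G :=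
  ⟨μ.catB z.1, catB_isBoundary μ hμ z.1 z.2 h⟩

lemma mem_of_cat {U : Set (BPS G)} (hinv : IsInvariant U) (α : FinPath G) (hα : α.IsPath)
    (z : BPS G) (hz : z.1.start = α.range) (x : BPS G) (hx : x.1 = α.catB z.1) (hxU : x ∈ U) :
    z ∈ U :=
  hinv α ⟨α.range, []⟩ hα (isPath_nil _) (range_nil _).symm z hz x z hx
    (catB_nil α.range z.1 hz).symm hxU

lemma cat_mem {U : Set (BPS G)} (hinv : IsInvariant U) (α : FinPath G) (hα : α.IsPath)
    (z : BPS G) (hz : z.1.start = α.range) (x : BPS G) (hx : x.1 = α.catB z.1) (hzU : z ∈ U) :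
    x ∈ U :=
  hinv ⟨α.range, []⟩ α (isPath_nil _) hα (range_nil _) z hz z x
    (catB_nil α.range z.1 hz).symm hx hzU

lemma isPath_extend (μ : FinPath G) (hμ : μ.IsPath) (e : G.Ed) (h : G.src e = μ.range) :
    (μ.extend e).IsPath :=
  isPath_append μ ⟨μ.range, [e]⟩ hμ
    ⟨fun f hf => by
        obtain rfl : e = f := by simpa using hf
        exact h,
      List.isChain_singleton e⟩ rfl

lemma range_extend (μ : FinPath G) (e : G.Ed) : (μ.extend e).range = G.rng e :=
  range_eq_of_getLast? (by simp [FinPath.extend])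

lemma range_singleton (w : G.V) (e : G.Ed) : (⟨w, [e]⟩ : FinPath G).range = G.rng e :=
  range_eq_of_getLast? (by simp)

lemma start_of_mem_ZSet {x : BPS G} {μ : FinPath G} (hμ : μ.IsPath) (hx : x ∈ ZSet μ) :
    x.1.start = μ.start := by
  obtain ⟨z, hz, h⟩ := hx
  rw [h]
  exact catB_start μ hμ z.1 hz

lemma prefix_of_mem_ZSet_fin {x : BPS G} {μ p : FinPath G} (hx : x ∈ ZSet μ)
    (hp : x.1 = .fin p) : μ.edges <+: p.edges := by
  obtain ⟨z, hz, h⟩ := hx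
  rw [hp] at h
  cases hq : z.1 with
  | fin q =>
    rw [hq] at h
    simp only [FinPath.catB, BPath.fin.injEq] at h
    rw [h]
    exact ⟨q.edges, rfl⟩
  | inf f =>
    rw [hq] at h
    exact absurd h (by simp [FinPath.catB])

lemma eq_of_mem_ZSet_inf {x : BPS G} {μ : FinPath G} (hx : x ∈ ZSet μ) {f : ℕ → G.Ed}
    (hf : x.1 = .inf f) {i : ℕ} (hi : i < μ.edges.length) : μ.edges[i] = f i := by
  obtain ⟨z, hz, h⟩ := hx
  rw [hf] at h
  cases hq : z.1 with
  | fin q =>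
    rw [hq] at h
    exact absurd h (by simp [FinPath.catB])
  | inf g =>
    rw [hq] at h
    simp only [FinPath.catB, BPath.inf.injEq] at h
    have := congrFun h i
    rw [this, dif_pos hi]

lemma prefix_of_mem_two {x : BPS G} {μ ν : FinPath G} (hμ : μ.IsPath) (hν : ν.IsPath)
    (h1 : x ∈ ZSet μ) (h2 : x ∈ ZSet ν) (hlen : μ.edges.length ≤ ν.edges.length) :
    μ.start = ν.start ∧ μ.edges <+: ν.edges := by
  refine ⟨(start_of_mem_ZSet hμ h1).symm.trans (start_of_mem_ZSet hν h2), ?_⟩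
  cases hx1 : x.1 with
  | fin p =>
    exact List.prefix_of_prefix_length_le (prefix_of_mem_ZSet_fin h1 hx1)
      (prefix_of_mem_ZSet_fin h2 hx1) hlen
  | inf f =>
    rw [List.prefix_iff_eq_take]
    apply List.ext_getElem (by simp; omega)
    intro i ha hb
    rw [List.getElem_take, eq_of_mem_ZSet_inf h1 hx1 ha,
      eq_of_mem_ZSet_inf h2 hx1 (by simp at hb; omega)]

lemma ZSet_anti {μ ν : FinPath G} (hν : ν.IsPath) (hs : μ.start = ν.start)
    (hpre : μ.edges <+: ν.edges) : ZSet ν ⊆ ZSet μ := by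
  obtain ⟨l₂, hl⟩ := hpre
  intro y hy
  obtain ⟨z, hz, hyz⟩ := hy
  obtain ⟨-, h2, h3⟩ := isPath_split ν hν μ.edges l₂ hl.symm
  have hr : (⟨ν.start, μ.edges⟩ : FinPath G).range = μ.range := by rw [← hs]
  rw [hr] at h2 h3
  have hz' : z.1.start = (⟨μ.range, l₂⟩ : FinPath G).range := by rw [h3]; exact hz
  refine ⟨catBPS ⟨μ.range, l₂⟩ h2 z hz', catB_start _ h2 z.1 hz', ?_⟩
  show y.1 = μ.catB ((⟨μ.range, l₂⟩ : FinPath G).catB z.1)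
  rw [catB_assoc]
  have hh : (⟨μ.start, μ.edges ++ (⟨μ.range, l₂⟩ : FinPath G).edges⟩ : FinPath G) = ν := by
    show (⟨μ.start, μ.edges ++ l₂⟩ : FinPath G) = ν
    rw [hs, hl]
  rw [hh]
  exact hyz

lemma mem_ZSet_self {x : BPS G} {p : FinPath G} (hp : x.1 = .fin p) : x ∈ ZSet p := by
  have hb : (BPath.fin p).IsBoundary := hp ▸ x.2
  refine ⟨⟨.fin ⟨p.range, []⟩, ⟨isPath_nil _, ?_⟩⟩, rfl, ?_⟩
  · show IsSink G (⟨p.range, ([] : List G.Ed)⟩ : FinPath G).range ∨ _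
    rw [range_nil]
    exact hb.2
  · rw [hp]
    show BPath.fin p = BPath.fin ⟨p.start, p.edges ++ []⟩
    rw [List.append_nil]

lemma not_mem_union_iff {x : BPS G} {μ : FinPath G} {F : Finset G.Ed} :
    x ∉ (⋃ e ∈ F, ZSet (μ.extend e)) ↔ ∀ e ∈ F, x ∉ ZSet (μ.extend e) := by
  simp [Set.mem_iUnion]

lemma basic_inter_aux {x : BPS G} {μ₁ μ₂ : FinPath G} {F₁ F₂ : Finset G.Ed}
    (hμ₁ : μ₁.IsPath) (hμ₂ : μ₂.IsPath)
    (hF₁ : ∀ e ∈ F₁, G.src e = μ₁.range) (hF₂ : ∀ e ∈ F₂, G.src e = μ₂.range)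
    (h1 : x ∈ ZSetMinus μ₁ F₁) (h2 : x ∈ ZSetMinus μ₂ F₂)
    (hlen : μ₁.edges.length ≤ μ₂.edges.length) :
    ∃ (μ : FinPath G) (F : Finset G.Ed), μ.IsPath ∧ (∀ e ∈ F, G.src e = μ.range) ∧
      x ∈ ZSetMinus μ F ∧ ZSetMinus μ F ⊆ ZSetMinus μ₁ F₁ ∩ ZSetMinus μ₂ F₂ := by
  classical
  obtain ⟨hs, hpre⟩ := prefix_of_mem_two hμ₁ hμ₂ h1.1 h2.1 hlen
  by_cases heq : μ₁.edges.length = μ₂.edges.length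
  · have hedges : μ₁.edges = μ₂.edges := hpre.eq_of_length heq
    have hμeq : μ₁ = μ₂ := by
      cases μ₁; cases μ₂
      simp_all
    subst hμeq
    refine ⟨μ₁, F₁ ∪ F₂, hμ₁, fun e he => ?_, ⟨h1.1, ?_⟩, fun y hy => ⟨⟨hy.1, ?_⟩, ⟨hy.1, ?_⟩⟩⟩
    · rcases Finset.mem_union.mp he with h | h
      · exact hF₁ e h
      · exact hF₂ e h
    · rw [not_mem_union_iff]
      intro e he
      rcases Finset.mem_union.mp he with h | h
      · exact not_mem_union_iff.mp h1.2 e h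
      · exact not_mem_union_iff.mp h2.2 e h
    · rw [not_mem_union_iff]
      intro e he
      exact not_mem_union_iff.mp hy.2 e (Finset.mem_union_left _ he)
    · rw [not_mem_union_iff]
      intro e he
      exact not_mem_union_iff.mp hy.2 e (Finset.mem_union_right _ he)
  · have hlt : μ₁.edges.length < μ₂.edges.length := lt_of_le_of_ne hlen heq
    refine ⟨μ₂, F₂, hμ₂, hF₂, h2, fun y hy => ⟨⟨ZSet_anti hμ₂ hs hpre hy.1, ?_⟩, hy⟩⟩
    rw [not_mem_union_iff]
    intro f hf hyf
    have hμf : (μ₁.extend f).IsPath := isPath_extend μ₁ hμ₁ f (hF₁ f hf)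
    have hyπ : y ∈ ZSet μ₂ := hy.1
    have hlen2 : (μ₁.extend f).edges.length ≤ μ₂.edges.length := by
      show (μ₁.edges ++ [f]).length ≤ _
      simp only [List.length_append, List.length_singleton]
      omega
    obtain ⟨hs2, hpre2⟩ := prefix_of_mem_two hμf hμ₂ hyf hyπ hlen2
    have : x ∈ ZSet (μ₁.extend f) :=
      ZSet_anti hμ₂ hs2 hpre2 h2.1
    exact not_mem_union_iff.mp h1.2 f hf this

lemma basic_inter {x : BPS G} {μ₁ μ₂ : FinPath G} {F₁ F₂ : Finset G.Ed}
    (hμ₁ : μ₁.IsPath) (hμ₂ : μ₂.IsPath)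
    (hF₁ : ∀ e ∈ F₁, G.src e = μ₁.range) (hF₂ : ∀ e ∈ F₂, G.src e = μ₂.range)
    (h1 : x ∈ ZSetMinus μ₁ F₁) (h2 : x ∈ ZSetMinus μ₂ F₂) :
    ∃ (μ : FinPath G) (F : Finset G.Ed), μ.IsPath ∧ (∀ e ∈ F, G.src e = μ.range) ∧
      x ∈ ZSetMinus μ F ∧ ZSetMinus μ F ⊆ ZSetMinus μ₁ F₁ ∩ ZSetMinus μ₂ F₂ := by
  rcases le_total μ₁.edges.length μ₂.edges.length with hle | hle
  · exact basic_inter_aux hμ₁ hμ₂ hF₁ hF₂ h1 h2 hle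
  · obtain ⟨μ, F, a, b, c, d⟩ := basic_inter_aux hμ₂ hμ₁ hF₂ hF₁ h2 h1 hle
    exact ⟨μ, F, a, b, c, fun y hy => ⟨(d hy).2, (d hy).1⟩⟩

lemma exists_basic {U : Set (BPS G)} (hopen : IsOpen U) {x : BPS G} (hx : x ∈ U) :
    ∃ (μ : FinPath G) (F : Finset G.Ed), μ.IsPath ∧ (∀ e ∈ F, G.src e = μ.range) ∧
      x ∈ ZSetMinus μ F ∧ ZSetMinus μ F ⊆ U := by
  have hgen : TopologicalSpace.GenerateOpen
      { W | ∃ (μ : FinPath G) (F : Finset G.Ed),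
        μ.IsPath ∧ (∀ e ∈ F, G.src e = μ.range) ∧ W = ZSetMinus μ F } U := hopen
  clear hopen
  induction hgen with
  | basic V hV =>
    obtain ⟨μ, F, a, b, rfl⟩ := hV
    exact ⟨μ, F, a, b, hx, subset_rfl⟩
  | univ =>
    refine ⟨⟨x.1.start, []⟩, ∅, isPath_nil _, by simp, ⟨mem_ZSet_nil.mpr rfl, by simp⟩,
      Set.subset_univ _⟩
  | inter U₁ U₂ hU₁ hU₂ ih₁ ih₂ =>
    obtain ⟨μ₁, F₁, a1, a2, a3, a4⟩ := ih₁ hx.1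
    obtain ⟨μ₂, F₂, b1, b2, b3, b4⟩ := ih₂ hx.2
    obtain ⟨μ, F, c1, c2, c3, c4⟩ := basic_inter a1 b1 a2 b2 a3 b3
    exact ⟨μ, F, c1, c2, c3, fun y hy => ⟨a4 (c4 hy).1, b4 (c4 hy).2⟩⟩
  | sUnion T hT ih =>
    obtain ⟨t, htT, hxt⟩ := hx
    obtain ⟨μ, F, c1, c2, c3, c4⟩ := ih t htT hxt
    exact ⟨μ, F, c1, c2, c3, c4.trans (Set.subset_sUnion_of_mem htT)⟩

lemma mem_HOf {U : Set (BPS G)} {v : G.V} : v ∈ HOf U ↔ ∀ x : BPS G, x.1.start = v → x ∈ U := by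
  constructor
  · intro h x hx
    exact h (mem_ZSet_nil.mpr hx)
  · intro h y hy
    exact h y (mem_ZSet_nil.mp hy)

lemma step_mem {U : Set (BPS G)} (hinv : IsInvariant U) {v : G.V}
    (hedges : ∀ e : G.Ed, G.src e = v → G.rng e ∈ HOf U)
    (x : BPS G) (hx : x.1.start = v)
    (hne : ∀ p : FinPath G, x.1 = BPath.fin p → p.edges ≠ []) : x ∈ U := by
  cases hx1 : x.1 with
  | fin p =>
    have hb : (BPath.fin p).IsBoundary := hx1 ▸ x.2
    obtain ⟨hp, hr⟩ := hb
    have hpv : p.start = v := by rw [hx1] at hx; exact hx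
    cases hpe : p.edges with
    | nil => exact absurd hpe (hne p hx1)
    | cons e rest =>
      have hsrc : G.src e = v := by
        rw [← hpv]
        exact hp.1 e (by rw [hpe]; rfl)
      have hα : (⟨v, [e]⟩ : FinPath G).IsPath :=
        ⟨fun f hf => by
          obtain rfl : e = f := by simpa using hf
          exact hsrc,
        List.isChain_singleton e⟩
      obtain ⟨-, h2, h3⟩ := isPath_split p hp [e] rest (by rw [hpe]; rfl)
      have hr1 : (⟨p.start, [e]⟩ : FinPath G).range = G.rng e := range_singleton _ _
      rw [hr1] at h2 h3
      have hz2 : (BPath.fin (⟨G.rng e, rest⟩ : FinPath G)).IsBoundary := ⟨h2, by rw [h3]; exact hr⟩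
      set z : BPS G := ⟨.fin ⟨G.rng e, rest⟩, hz2⟩ with hzdef
      have hzU : z ∈ U := mem_HOf.mp (hedges e hsrc) z rfl
      refine cat_mem hinv ⟨v, [e]⟩ hα z (by rw [range_singleton]; rfl) x ?_ hzU
      rw [hx1]
      show BPath.fin p = BPath.fin ⟨v, [e] ++ rest⟩
      rw [List.singleton_append, ← hpe, ← hpv]
  | inf f =>
    have hb0 : (BPath.inf f).IsBoundary := hx1 ▸ x.2
    have hb : InfIsPath G f := hb0
    have hsrc : G.src (f 0) = v := by rw [hx1] at hx; exact hx
    have hα : (⟨v, [f 0]⟩ : FinPath G).IsPath :=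
      ⟨fun g hg => by
        obtain rfl : f 0 = g := by simpa using hg
        exact hsrc,
      List.isChain_singleton _⟩
    set z : BPS G := ⟨.inf (fun n => f (n + 1)), fun n => hb (n + 1)⟩ with hzdef
    have hzstart : z.1.start = G.rng (f 0) := (hb 0).symm
    have hzU : z ∈ U := mem_HOf.mp (hedges (f 0) hsrc) z hzstart
    refine cat_mem hinv ⟨v, [f 0]⟩ hα z (by rw [range_singleton]; exact hzstart) x ?_ hzU
    rw [hx1]
    show BPath.inf f = BPath.inf _
    congr 1
    funext n
    show f n = if h : n < ([f 0] : List G.Ed).length then ([f 0] : List G.Ed)[n] else f (n - 1 + 1)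
    by_cases h : n < 1
    · obtain rfl : n = 0 := by omega
      rw [dif_pos (by simp)]
      rfl
    · rw [dif_neg (by simpa using h)]
      congr 1
      omega

end GraphLPA

namespace GraphLPA

/-- for open invariant `U ⊆ X`, the pair `(H_U, S_U)` lies in `𝒯_E`. -/
theorem statement_3 (G : DirGraph) (U : Set (BPS G))
    (hopen : IsOpen U) (hinv : IsInvariant U) :
    Hereditary G (HOf U) ∧ Saturated G (HOf U) ∧ SOf U ⊆ BreakVerts G (HOf U) := by
  refine ⟨?_, ?_, ?_⟩
  · -- Hereditary
    intro e he
    apply mem_HOf.mpr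
    intro x hx
    have hα : (⟨G.src e, [e]⟩ : FinPath G).IsPath :=
      ⟨fun f hf => by
        obtain rfl : e = f := by simpa using hf
        rfl,
      List.isChain_singleton e⟩
    have hx' : x.1.start = (⟨G.src e, [e]⟩ : FinPath G).range := by
      rw [range_singleton]; exact hx
    have hyU : catBPS ⟨G.src e, [e]⟩ hα x hx' ∈ U :=
      mem_HOf.mp he _ (catB_start _ hα x.1 hx')
    exact mem_of_cat hinv _ hα x hx' _ rfl hyU
  · -- Saturated
    intro v hreg hall
    apply mem_HOf.mpr
    intro x hx
    refine step_mem hinv (fun e he => hall e he) x hx ?_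
    intro p hp1 hpe
    have hb : (BPath.fin p).IsBoundary := hp1 ▸ x.2
    have hpv : p.start = v := by rw [hp1] at hx; exact hx
    have hrr := hb.2
    rw [range_of_nil p hpe, hpv] at hrr
    rcases hrr with h | h
    · exact hreg.1 h
    · exact hreg.2 h
  · -- SOf ⊆ BreakVerts
    rintro w ⟨x₀, hx₀U, p, hx₀p, hpw, hie, hwH⟩
    have hb0 : (BPath.fin p).IsBoundary := hx₀p ▸ x₀.2
    have hp : p.IsPath := hb0.1
    refine ⟨hwH, hie, ?_, ?_⟩
    · -- Finite
      obtain ⟨μ, F, hμ, hF, hxmem, hsub⟩ := exists_basic hopen hx₀U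
      apply Set.Finite.subset F.finite_toSet
      rintro e ⟨hesrc, heH⟩
      by_contra heF
      apply heH
      apply mem_HOf.mpr
      intro z hz
      have hsrc' : G.src e = p.range := by rw [hpw]; exact hesrc
      have hπ : (p.extend e).IsPath := isPath_extend p hp e hsrc'
      have hz' : z.1.start = (p.extend e).range := by rw [range_extend]; exact hz
      set y := catBPS (p.extend e) hπ z hz' with hydef
      have hyπ : y ∈ ZSet (p.extend e) := ⟨z, hz', rfl⟩
      have hx₀Z : x₀ ∈ ZSet μ := hxmem.1
      have hx₀pz : x₀ ∈ ZSet p := mem_ZSet_self hx₀p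
      have hpre : μ.edges <+: p.edges := prefix_of_mem_ZSet_fin hx₀Z hx₀p
      have hsμ : μ.start = p.start := by
        have h1 : x₀.1.start = μ.start := start_of_mem_ZSet hμ hx₀Z
        have h2 : x₀.1.start = p.start := by rw [hx₀p]; rfl
        exact h1.symm.trans h2
      have hyμ : y ∈ ZSet μ :=
        ZSet_anti hπ hsμ (hpre.trans (List.prefix_append p.edges [e])) hyπ
      have hynotin : ∀ f ∈ F, y ∉ ZSet (μ.extend f) := by
        intro f hf hyf
        have hμf : (μ.extend f).IsPath := isPath_extend μ hμ f (hF f hf)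
        have hlen2 : (μ.extend f).edges.length ≤ (p.extend e).edges.length := by
          have := hpre.length_le
          show (μ.edges ++ [f]).length ≤ (p.edges ++ [e]).length
          simp only [List.length_append, List.length_singleton]
          omega
        obtain ⟨hs2, hpre2⟩ := prefix_of_mem_two hμf hπ hyf hyπ hlen2
        by_cases hcase : μ.edges.length = p.edges.length
        · have hμp : μ.edges = p.edges := hpre.eq_of_length hcase
          have heq2 : μ.edges ++ [f] = p.edges ++ [e] := by
            apply hpre2.eq_of_length
            show (μ.edges ++ [f]).length = (p.edges ++ [e]).length
            simp [hμp]
          rw [hμp] at heq2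
          have : f = e := by simpa using List.append_cancel_left heq2
          rw [this] at hf
          exact heF hf
        · have htake : List.take (μ.extend f).edges.length (p.edges ++ [e]) =
              List.take (μ.extend f).edges.length p.edges := by
            rw [List.take_append]
            have h0 : (μ.extend f).edges.length - p.edges.length = 0 := by
              have := hpre.length_le
              show (μ.edges ++ [f]).length - _ = 0
              simp only [List.length_append, List.length_singleton]
              omega
            rw [h0]
            simp
          have hpre3 : (μ.extend f).edges <+: p.edges := by
            rw [List.prefix_iff_eq_take, ← htake]
            exact List.prefix_iff_eq_take.mp hpre2
          exact not_mem_union_iff.mp hxmem.2 f hf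
            (ZSet_anti (μ := μ.extend f) hp hsμ hpre3 hx₀pz)
      have hyU : y ∈ U := hsub ⟨hyμ, not_mem_union_iff.mpr hynotin⟩
      exact mem_of_cat hinv (p.extend e) hπ z hz' y rfl hyU
    · -- Nonempty
      rcases Set.eq_empty_or_nonempty {e : G.Ed | G.src e = w ∧ G.rng e ∉ HOf U} with hemp | hne
      · exfalso
        apply hwH
        have hedges : ∀ e : G.Ed, G.src e = w → G.rng e ∈ HOf U := by
          intro e he
          by_contra hc
          have : e ∈ {e : G.Ed | G.src e = w ∧ G.rng e ∉ HOf U} := ⟨he, hc⟩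
          rw [hemp] at this
          exact this
        apply mem_HOf.mpr
        intro x hx
        by_cases hfin : ∃ q : FinPath G, x.1 = BPath.fin q ∧ q.edges = []
        · obtain ⟨q, hq1, hq2⟩ := hfin
          have hzstart : x.1.start = p.range := by rw [hpw]; exact hx
          refine mem_of_cat hinv p hp x hzstart x₀ ?_ hx₀U
          rw [hx₀p, hq1]
          show BPath.fin p = BPath.fin ⟨p.start, p.edges ++ q.edges⟩
          rw [hq2, List.append_nil]
        · push_neg at hfin
          exact step_mem hinv hedges x hx (fun q hq => hfin q hq)
      · exact hne

end GraphLPA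
end

section
/- For every pair (H, S) ∈ 𝒯_E, setting V := U_{H,S}, one has H_V = H and S_V = S. -/
namespace GraphLPA

/-! ### Auxiliary material -/

/-- `range` of a path with a cons edge list only depends on the edges. -/
lemma range_cons (G : DirGraph) (s : G.V) (f : G.Ed) (t : List G.Ed) :
    FinPath.range ⟨s, f :: t⟩ = FinPath.range ⟨G.rng f, t⟩ := by
  cases t with
  | nil => simp [FinPath.range]
  | cons a l =>
    cases hg : (a :: l).getLast? with
    | none => exact absurd (List.getLast?_eq_none_iff.mp hg) (by simp)
    | some g => simp [FinPath.range, List.getLast?_cons_cons, hg]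

lemma range_nil_s5 (G : DirGraph) (s : G.V) : FinPath.range ⟨s, []⟩ = s := rfl

/-- If the start of a valid path is in a hereditary set, so is its range. -/
lemma range_mem_of_start (G : DirGraph) (H : Set G.V) (hher : Hereditary G H) :
    ∀ (l : List G.Ed) (s : G.V), (∀ e ∈ l.head?, G.src e = s) →
      l.Chain' (fun e f => G.rng e = G.src f) → s ∈ H →
      FinPath.range (⟨s, l⟩ : FinPath G) ∈ H := by
  intro l
  induction l with
  | nil => intro s _ _ hs; exact hs
  | cons f t ih =>
    intro s hhead hc hs
    rw [range_cons]
    have hsf : G.src f = s := hhead f rfl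
    have hrf : G.rng f ∈ H := hher f (hsf ▸ hs)
    unfold List.Chain' at hc
    rw [List.isChain_cons] at hc
    exact ih (G.rng f) (fun e he => (hc.1 e he).symm) hc.2 hrf

/-- If the range of some edge of a valid path is in a hereditary set, so is its range. -/
lemma range_mem_of_edge (G : DirGraph) (H : Set G.V) (hher : Hereditary G H) :
    ∀ (l : List G.Ed) (s : G.V), l.Chain' (fun e f => G.rng e = G.src f) →
      ∀ e ∈ l, G.rng e ∈ H → FinPath.range (⟨s, l⟩ : FinPath G) ∈ H := by
  intro l
  induction l with
  | nil => intro s _ e he; exact absurd he List.not_mem_nil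
  | cons f t ih =>
    intro s hc e he hre
    unfold List.Chain' at hc
    rw [List.isChain_cons] at hc
    rw [range_cons]
    rcases List.mem_cons.mp he with rfl | he'
    · exact range_mem_of_start G H hher t (G.rng e)
        (fun g hg => (hc.1 g hg).symm) hc.2 hre
    · exact ih (G.rng f) hc.2 e he' hre

/-- `Z(v)` is the set of boundary paths starting at `v`. -/
lemma zset_vertex (G : DirGraph) (v : G.V) :
    ZSet (⟨v, []⟩ : FinPath G) = {x : BPS G | x.1.start = v} := by
  ext x
  constructor
  · rintro ⟨z, hz, hx⟩
    have hzv : z.1.start = v := hz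
    cases hzc : z.1 with
    | fin p =>
      rw [hzc] at hx
      simp only [FinPath.catB] at hx
      show x.1.start = v
      rw [hx]; rfl
    | inf f =>
      rw [hzc] at hx
      simp only [FinPath.catB] at hx
      show x.1.start = v
      rw [hx]
      rw [hzc] at hzv
      simpa [BPath.start] using hzv
  · intro hx
    refine ⟨x, hx, ?_⟩
    cases hxc : x.1 with
    | fin p =>
      cases p with
      | mk st ed =>
        have hps : st = v := by
          simp only [Set.mem_setOf_eq, hxc] at hx; exact hx
        simp only [FinPath.catB, List.nil_append]
        rw [hps]
    | inf f =>
      simp only [FinPath.catB]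
      congr 1

/-- A sink is not an infinite emitter. -/
lemma not_infEmitter_of_sink (G : DirGraph) (v : G.V) (h : IsSink G v) :
    ¬ IsInfEmitter G v := by
  intro hin
  have : {e : G.Ed | G.src e = v} = ∅ := by
    ext e; simp only [Set.mem_setOf_eq, Set.mem_empty_iff_false, iff_false]
    exact h e
  rw [IsInfEmitter, this] at hin
  exact hin Set.finite_empty

open Classical in
/-- Recursive vertex sequence trying to avoid `H`. -/
noncomputable def vseq (G : DirGraph) (H : Set G.V) (v : G.V) : ℕ → G.V
  | 0 => v
  | n + 1 =>
    if h : ∃ e, G.src e = vseq G H v n ∧ G.rng e ∉ H then G.rng h.choose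
    else vseq G H v n

open Classical in
/-- Edge lists accumulated along `vseq`. -/
noncomputable def elist (G : DirGraph) (H : Set G.V) (v : G.V) : ℕ → List G.Ed
  | 0 => []
  | n + 1 =>
    elist G H v n ++
      (if h : ∃ e, G.src e = vseq G H v n ∧ G.rng e ∉ H then [h.choose] else [])

lemma vseq_not_mem (G : DirGraph) (H : Set G.V) (v : G.V) (hv : v ∉ H) :
    ∀ n, vseq G H v n ∉ H := by
  intro n
  induction n with
  | zero => exact hv
  | succ n ih =>
    rw [vseq]
    split
    · next h => exact h.choose_spec.2
    · exact ih

lemma elist_path_range (G : DirGraph) (H : Set G.V) (v : G.V) :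
    ∀ n, FinPath.IsPath (⟨v, elist G H v n⟩ : FinPath G) ∧
      FinPath.range (⟨v, elist G H v n⟩ : FinPath G) = vseq G H v n := by
  intro n
  induction n with
  | zero =>
    rw [elist]
    exact ⟨⟨fun e he => by simp at he, List.isChain_nil⟩, rfl⟩
  | succ n ih =>
    obtain ⟨⟨hhead, hchain⟩, hrange⟩ := ih
    rw [elist, vseq]
    split
    · next h =>
      obtain ⟨hsrc, _⟩ := h.choose_spec
      constructor
      · constructor
        · intro e he
          rw [List.head?_append] at he
          cases hl : (elist G H v n).head? with
          | some f =>
            rw [hl] at he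
            have he' : e = f := by
              have := by simpa [Option.mem_def] using he
              exact this.symm
            exact he' ▸ hhead f hl
          | none =>
            rw [hl] at he
            simp only [Option.none_or] at he
            simp only [List.head?_cons, Option.mem_def, Option.some.injEq] at he
            subst he
            have hnil : elist G H v n = [] := List.head?_eq_none_iff.mp hl
            rw [hnil] at hrange
            exact hsrc.trans hrange.symm
        · unfold List.Chain'
          rw [List.isChain_append]
          refine ⟨hchain, List.isChain_singleton _, ?_⟩
          intro x hx y hy
          simp only [List.head?_cons, Option.mem_def, Option.some.injEq] at hy
          subst hy
          rw [hsrc, ← hrange]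
          -- range of ⟨v, elist⟩ with nonempty elist is rng of its last
          have hne : elist G H v n ≠ [] := by
            intro hnil; rw [hnil] at hx; simp at hx
          rw [FinPath.range]
          cases hg : (elist G H v n).getLast? with
          | none => exact absurd (List.getLast?_eq_none_iff.mp hg) hne
          | some g =>
            rw [Option.mem_def] at hx
            rw [hg] at hx
            cases hx
            rfl
      · rw [FinPath.range, List.getLast?_concat]
    · next h =>
      rw [List.append_nil]
      exact ⟨⟨hhead, hchain⟩, hrange⟩

lemma elist_rng_not_mem (G : DirGraph) (H : Set G.V) (v : G.V) :
    ∀ n, ∀ e ∈ elist G H v n, G.rng e ∉ H := by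
  intro n
  induction n with
  | zero => intro e he; exact absurd he List.not_mem_nil
  | succ n ih =>
    intro e he
    rw [elist] at he
    rcases List.mem_append.mp he with h1 | h2
    · exact ih e h1
    · revert h2
      split
      · next h =>
        intro h2
        simp only [List.mem_singleton] at h2
        subst h2
        exact h.choose_spec.2
      · intro h2; exact absurd h2 List.not_mem_nil

/-- Main construction: from any vertex outside `H` there is a boundary path
avoiding `U_{H,S}`. -/
lemma main_construct (G : DirGraph) (H S : Set G.V)
    (hsat : Saturated G H) (hS : S ⊆ BreakVerts G H)
    (v : G.V) (hv : v ∉ H) :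
    ∃ x : BPS G, x.1.start = v ∧ x ∉ UHS H S := by
  classical
  by_cases hall : ∀ n, ∃ e, G.src e = vseq G H v n ∧ G.rng e ∉ H
  · -- infinite path case
    set f : ℕ → G.Ed := fun n => (hall n).choose with hf
    have hsrc : ∀ n, G.src (f n) = vseq G H v n := fun n => (hall n).choose_spec.1
    have hrng : ∀ n, G.rng (f n) = vseq G H v (n + 1) := by
      intro n
      rw [vseq, dif_pos (hall n)]
    have hbdry : InfIsPath G f := fun n => (hrng n).trans (hsrc (n + 1)).symm
    refine ⟨⟨.inf f, hbdry⟩, ?_, ?_⟩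
    · show G.src (f 0) = v
      rw [hsrc 0]; rfl
    · rintro (⟨u, huH, hon⟩ | ⟨p, hp, _⟩)
      · rcases hon with h0 | ⟨n, hn⟩
        · rw [hsrc 0] at h0
          exact vseq_not_mem G H v hv 0 (h0 ▸ huH)
        · rw [hrng n] at hn
          exact vseq_not_mem G H v hv (n + 1) (hn ▸ huH)
      · exact absurd hp (by simp)
  · -- blocked case: finite boundary path
    have hex : ∃ n, ¬ ∃ e, G.src e = vseq G H v n ∧ G.rng e ∉ H := by
      push_neg at hall ⊢
      obtain ⟨n, hn⟩ := hall
      exact ⟨n, hn⟩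
    set N := Nat.find hex with hN
    have hblocked : ¬ ∃ e, G.src e = vseq G H v N ∧ G.rng e ∉ H := Nat.find_spec hex
    set w := vseq G H v N with hw
    have hwH : w ∉ H := vseq_not_mem G H v hv N
    have hTerm : IsSink G w ∨ (IsInfEmitter G w ∧ w ∉ S) := by
      by_cases hie : IsInfEmitter G w
      · right
        refine ⟨hie, fun hwS => ?_⟩
        obtain ⟨e, he⟩ := (hS hwS).2.2.2
        exact hblocked ⟨e, he⟩
      · by_cases hsink : IsSink G w
        · left; exact hsink
        · exfalso
          apply hwH
          apply hsat w ⟨hsink, hie⟩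
          intro e hse
          by_contra hre
          exact hblocked ⟨e, hse, hre⟩
    obtain ⟨hpath, hrange⟩ := elist_path_range G H v N
    have hb : BPath.IsBoundary (.fin (⟨v, elist G H v N⟩ : FinPath G)) := by
      refine ⟨hpath, ?_⟩
      rw [hrange]
      rcases hTerm with h | h
      · exact Or.inl h
      · exact Or.inr h.1
    refine ⟨⟨.fin ⟨v, elist G H v N⟩, hb⟩, rfl, ?_⟩
    rintro (⟨u, huH, hon⟩ | ⟨q, hq, hqS⟩)
    · rcases hon with h0 | ⟨e, he, hre⟩
      · have h0' : v = u := h0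
        exact hv (h0' ▸ huH)
      · exact elist_rng_not_mem G H v N e he (hre ▸ huH)
    · have hq' : (⟨v, elist G H v N⟩ : FinPath G) = q := by
        injection hq
      rw [← hq', hrange] at hqS
      rcases hTerm with h | h
      · exact not_infEmitter_of_sink G w h (hS hqS).2.1
      · exact h.2 hqS

/-- for `(H,S) ∈ 𝒯_E` and `V := U_{H,S}`, `H_V = H` and `S_V = S`. -/
theorem statement_5 (G : DirGraph) (H S : Set G.V)
    (hher : Hereditary G H) (hsat : Saturated G H) (hS : S ⊆ BreakVerts G H) :
    HOf (UHS H S) = H ∧ SOf (UHS H S) = S := by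
  have hH : HOf (UHS H S) = H := by
    ext v
    constructor
    · intro hv
      by_contra hvH
      obtain ⟨x, hxs, hxU⟩ := main_construct G H S hsat hS v hvH
      apply hxU
      apply hv
      rw [zset_vertex]
      exact hxs
    · intro hv
      rw [HOf, Set.mem_setOf_eq, zset_vertex]
      intro x hx
      left
      refine ⟨v, hv, ?_⟩
      simp only [Set.mem_setOf_eq] at hx
      cases hxc : x.1 with
      | fin p =>
        left
        rw [hxc] at hx
        exact hx
      | inf f =>
        left
        rw [hxc] at hx
        exact hx
  refine ⟨hH, ?_⟩
  ext w
  constructor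
  · rintro ⟨x, hxU, p, hxp, hpw, hinf, hnH⟩
    rw [hH] at hnH
    rcases hxU with ⟨u, huH, hon⟩ | ⟨q, hq, hqS⟩
    · exfalso
      rw [hxp] at hon
      have hbd := x.2
      rw [hxp] at hbd
      obtain ⟨⟨hhead, hchain⟩, _⟩ := hbd
      rcases hon with h0 | ⟨e, he, hre⟩
      · apply hnH
        rw [← hpw]
        have : p = (⟨p.start, p.edges⟩ : FinPath G) := rfl
        rw [this]
        exact range_mem_of_start G H hher p.edges p.start hhead hchain (h0 ▸ huH)
      · apply hnH
        rw [← hpw]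
        have : p = (⟨p.start, p.edges⟩ : FinPath G) := rfl
        rw [this]
        exact range_mem_of_edge G H hher p.edges p.start hchain e he (hre ▸ huH)
    · have hq' : p = q := by rw [hxp] at hq; injection hq
      rw [← hpw, hq']
      exact hqS
  · intro hwS
    have hwB := hS hwS
    have hb : BPath.IsBoundary (.fin (⟨w, []⟩ : FinPath G)) := by
      refine ⟨⟨fun e he => by simp at he, List.isChain_nil⟩, Or.inr ?_⟩
      rw [range_nil_s5]
      exact hwB.2.1
    refine ⟨⟨.fin ⟨w, []⟩, hb⟩, Or.inr ⟨⟨w, []⟩, rfl, by rw [range_nil_s5]; exact hwS⟩,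
      ⟨w, []⟩, rfl, range_nil_s5 G w, hwB.2.1, ?_⟩
    rw [hH]
    exact hwB.1

end GraphLPA
end
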